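/- arXiv:1501.03417 — 4 statements merged into one kernel-verified Lean document; each statement's English description precedes it below -/
import Mathlib

section
/- Let T > 0, let w ∈ C¹(ℝ × [0,T]) be bounded, let Φ and P be C¹, and let f be Lipschitz with f(0,w) = 0 for all w. If ρ ∈ C^{1,2}(ℝ × [0,T]) is bounded and satisfies ρ_t + (ρ(Φ(w) − P(ρ)))_x = f(ρ,w) pointwise on ℝ × (0,T) with ρ(x,0) ≥ 0 for all x, then ρ(x,t) ≥ 0 for all (x,t) ∈ ℝ × [0,T]. -/
/-!
Expanding the flux, at a point where `ρ < 0` the equation gives the transport inequality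
`ρ_t + c ρ_x ≥ (K + M) ρ` with `c = Φ(w) - P(ρ) - ρ P'(ρ)`: the Lipschitz bound gives
`f(ρ, w) ≥ K ρ`, the speed `c` is bounded by some `s` because `w` and `ρ` are bounded, and `M`
bounds `∂ₓ Φ(w)` on a compact set. Nonnegativity at `(x₀, t₀)` is then a minimum principle on the
backward cone `|x - x₀| ≤ s (t₀ - t) + 1`, which contains the domain of dependence: if
`ρ(x₀, t₀) < 0`, then `ρ e^{-k t} + ε / ((s (t₀ - t) + 1)² - (x - x₀)²)` with `k > K + M` attains a
negative minimum inside the cone at a time `t > 0`, where its `x`-derivative vanishes and its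
`t`-derivative is nonpositive; this contradicts the transport inequality. Continuity in `t`
extends the result to `t = T`.
-/

open Set

theorem IsLocalMinOn.hasDerivAt_nonpos_of_Iic {g : ℝ → ℝ} {g' a : ℝ}
    (hmin : IsLocalMinOn g (Iic a) a) (hg : HasDerivAt g g' a) : g' ≤ 0 := by
  have hdir : (-1 : ℝ) ∈ posTangentConeAt (Iic a) a :=
    mem_posTangentConeAt_of_segment_subset <| by
      rw [segment_symm, segment_eq_Icc (by linarith)]; exact Icc_subset_Iic_self
  simpa using hmin.hasFDerivWithinAt_nonneg hg.hasFDerivAt.hasFDerivWithinAt hdir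

theorem HasFDerivAt.hasDerivAt_partial_fst {F : ℝ × ℝ → ℝ} {F' : ℝ × ℝ →L[ℝ] ℝ} {x t : ℝ}
    (h : HasFDerivAt F F' (x, t)) : HasDerivAt (fun y => F (y, t)) (F' (1, 0)) x :=
  h.comp_hasDerivAt x ((hasDerivAt_id x).prodMk (hasDerivAt_const x t))

def backwardCone (x₀ t₀ s : ℝ) : Set (ℝ × ℝ) :=
  {p | p.2 ∈ Icc 0 t₀ ∧ |p.1 - x₀| ≤ s * (t₀ - p.2) + 1}

def coneGap (x₀ t₀ s x t : ℝ) : ℝ := (s * (t₀ - t) + 1) ^ 2 - (x - x₀) ^ 2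

/-- The exponential weight absorbs the zeroth-order term of the transport inequality; the barrier
`ε / coneGap` blows up on the lateral boundary of the cone and keeps minima away from it. -/
noncomputable def weightedBarrier (ρ : ℝ → ℝ → ℝ) (x₀ t₀ s k ε x t : ℝ) : ℝ :=
  ρ x t * Real.exp (-(k * t)) + ε / coneGap x₀ t₀ s x t

section Cone

variable {x₀ t₀ s : ℝ}

theorem isCompact_backwardCone (hs : 0 ≤ s) : IsCompact (backwardCone x₀ t₀ s) := by
  have hclosed : IsClosed (backwardCone x₀ t₀ s) :=
    (isClosed_Icc.preimage continuous_snd).inter <|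
      isClosed_le (f := fun p : ℝ × ℝ => |p.1 - x₀|) (by fun_prop) (by fun_prop)
  refine (isCompact_Icc.prod isCompact_Icc : IsCompact
    (Icc (x₀ - (s * t₀ + 1)) (x₀ + (s * t₀ + 1)) ×ˢ Icc 0 t₀)).of_isClosed_subset hclosed ?_
  rintro ⟨x, t⟩ ⟨ht, hx⟩
  have : s * (t₀ - t) ≤ s * t₀ := by nlinarith [ht.1]
  exact ⟨⟨by linarith [neg_abs_le (x - x₀)], by linarith [le_abs_self (x - x₀)]⟩, ht⟩

theorem continuous_coneGap : Continuous (fun p : ℝ × ℝ => coneGap x₀ t₀ s p.1 p.2) := by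
  unfold coneGap; fun_prop

theorem abs_sub_le_of_coneGap_pos {x t : ℝ} (hs : 0 ≤ s) (ht : t ≤ t₀)
    (hq : 0 < coneGap x₀ t₀ s x t) : |x - x₀| ≤ s * (t₀ - t) + 1 :=
  abs_le_of_sq_le_sq (by unfold coneGap at hq; linarith) (by nlinarith)

theorem hasDerivAt_coneGap_space (x t : ℝ) :
    HasDerivAt (fun y => coneGap x₀ t₀ s y t) (-(2 * (x - x₀))) x := by
  unfold coneGap
  simpa using (((hasDerivAt_id x).sub_const x₀).pow 2).const_sub ((s * (t₀ - t) + 1) ^ 2)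

theorem hasDerivAt_coneGap_time (x t : ℝ) :
    HasDerivAt (fun τ => coneGap x₀ t₀ s x τ) (-(2 * s * (s * (t₀ - t) + 1))) t := by
  have hd : HasDerivAt (fun τ => s * (t₀ - τ) + 1) (-s) t := by
    simpa using (((hasDerivAt_id t).const_sub t₀).const_mul s).add_const 1
  exact ((hd.fun_pow 2).sub_const ((x - x₀) ^ 2)).congr_deriv (by ring)

end Cone

section Barrier

variable {ρ : ℝ → ℝ → ℝ} {x₀ t₀ s k ε x t : ℝ}

theorem hasDerivAt_weightedBarrier_space {ρx : ℝ} (hρx : HasDerivAt (fun y => ρ y t) ρx x)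
    (hq : coneGap x₀ t₀ s x t ≠ 0) :
    HasDerivAt (fun y => weightedBarrier ρ x₀ t₀ s k ε y t)
      (ρx * Real.exp (-(k * t)) + ε * (2 * (x - x₀)) / coneGap x₀ t₀ s x t ^ 2) x :=
  ((hρx.mul_const _).add ((hasDerivAt_const x ε).div (hasDerivAt_coneGap_space x t) hq)).congr_deriv
    (by ring)

theorem hasDerivAt_weightedBarrier_time {ρt : ℝ} (hρt : HasDerivAt (fun τ => ρ x τ) ρt t)
    (hq : coneGap x₀ t₀ s x t ≠ 0) :
    HasDerivAt (fun τ => weightedBarrier ρ x₀ t₀ s k ε x τ)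
      ((ρt - k * ρ x t) * Real.exp (-(k * t))
        + ε * (2 * s * (s * (t₀ - t) + 1)) / coneGap x₀ t₀ s x t ^ 2) t := by
  have hexp : HasDerivAt (fun τ => Real.exp (-(k * τ))) (Real.exp (-(k * t)) * -k) t := by
    simpa using ((hasDerivAt_id t).const_mul k).neg.exp
  exact ((hρt.mul hexp).add
    ((hasDerivAt_const t ε).div (hasDerivAt_coneGap_time x t) hq)).congr_deriv (by ring)

theorem lt_of_isLocalMin_weightedBarrier {L ρx ρt : ℝ} (hs : 0 ≤ s) (ht : t ≤ t₀) (hε : 0 ≤ ε)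
    (hLk : L < k) (hneg : ρ x t < 0) (hq : 0 < coneGap x₀ t₀ s x t)
    (hρx : HasDerivAt (fun y => ρ y t) ρx x) (hρt : HasDerivAt (fun τ => ρ x τ) ρt t)
    (hminx : IsLocalMin (fun y => weightedBarrier ρ x₀ t₀ s k ε y t) x)
    (hmint : IsLocalMinOn (fun τ => weightedBarrier ρ x₀ t₀ s k ε x τ) (Iic t) t) :
    ρt < L * ρ x t - s * |ρx| := by
  have hspace := hminx.hasDerivAt_eq_zero (hasDerivAt_weightedBarrier_space hρx hq.ne')
  have htime := hmint.hasDerivAt_nonpos_of_Iic (hasDerivAt_weightedBarrier_time hρt hq.ne')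
  set E := Real.exp (-(k * t))
  set q := coneGap x₀ t₀ s x t
  have hE : 0 < E := Real.exp_pos _
  have hslope : |ρx| * E = ε * (2 * |x - x₀|) / q ^ 2 := by
    rw [← abs_of_pos hE, ← abs_mul, eq_neg_of_add_eq_zero_left hspace]
    simp [abs_div, abs_mul, abs_of_nonneg hε]
  -- the barrier moves faster than the characteristics
  have hspeed : s * |ρx| * E ≤ ε * (2 * s * (s * (t₀ - t) + 1)) / q ^ 2 := by
    have hd := abs_sub_le_of_coneGap_pos hs ht hq
    rw [mul_assoc, hslope, ← mul_div_assoc]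
    gcongr ?_ / _
    nlinarith [mul_nonneg hs hε]
  have hdamp := mul_pos (mul_pos (sub_pos.2 hLk) (neg_pos.2 hneg)) hE
  have : (ρt - L * ρ x t + s * |ρx|) * E < 0 := by nlinarith
  linarith [neg_of_mul_neg_left this hE.le]

end Barrier

section MinimumPrinciple

variable {ρ : ℝ → ℝ → ℝ} {x₀ t₀ s : ℝ}

theorem exists_isMinOn_weightedBarrier (ht₀ : 0 ≤ t₀) (hs : 0 ≤ s)
    (hcont : ContinuousOn (fun p : ℝ × ℝ => ρ p.1 p.2) (backwardCone x₀ t₀ s))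
    (hneg : ρ x₀ t₀ < 0) (k : ℝ) :
    ∃ ε η : ℝ, 0 < ε ∧ 0 < η ∧ ∃ p ∈ backwardCone x₀ t₀ s, η < coneGap x₀ t₀ s p.1 p.2 ∧
      weightedBarrier ρ x₀ t₀ s k ε p.1 p.2 < 0 ∧
      IsMinOn (fun p : ℝ × ℝ => weightedBarrier ρ x₀ t₀ s k ε p.1 p.2)
        (backwardCone x₀ t₀ s ∩ {p | η ≤ coneGap x₀ t₀ s p.1 p.2}) p := by
  have hcone := isCompact_backwardCone (x₀ := x₀) (t₀ := t₀) hs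
  have happex : (x₀, t₀) ∈ backwardCone x₀ t₀ s := ⟨⟨ht₀, le_rfl⟩, by simp⟩
  obtain ⟨C, hC⟩ := hcone.exists_bound_of_continuousOn
    (f := fun p : ℝ × ℝ => ρ p.1 p.2 * Real.exp (-(k * p.2))) (hcont.mul (by fun_prop))
  simp only [Real.norm_eq_abs] at hC
  set v₀ := ρ x₀ t₀ * Real.exp (-(k * t₀))
  have hv₀ : v₀ < 0 := mul_neg_of_neg_of_pos hneg (Real.exp_pos _)
  have hC₀ : -v₀ ≤ C := (neg_le_abs v₀).trans (hC _ happex)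
  -- `η` is chosen so that the barrier dominates `C` wherever `coneGap ≤ η`
  set ε := -v₀ / 2 with hεdef
  set η := ε / C with hηdef
  have hε : 0 < ε := by linarith
  have hCpos : 0 < C := by linarith
  have hη : 0 < η := div_pos hε hCpos
  set region := backwardCone x₀ t₀ s ∩ {p | η ≤ coneGap x₀ t₀ s p.1 p.2}
  have hregion : IsCompact region :=
    hcone.inter_right (isClosed_le continuous_const continuous_coneGap)
  have happexK : (x₀, t₀) ∈ region :=
    ⟨happex, by simpa [coneGap, hηdef, div_le_one₀ hCpos] using (by linarith : ε ≤ C)⟩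
  have hu : ContinuousOn (fun p : ℝ × ℝ => weightedBarrier ρ x₀ t₀ s k ε p.1 p.2) region :=
    ((hcont.mono inter_subset_left).mul (by fun_prop)).add <| continuousOn_const.div
      continuous_coneGap.continuousOn fun p hp => (hη.trans_le hp.2).ne'
  obtain ⟨p, hpK, hmin⟩ := hregion.exists_isMinOn ⟨_, happexK⟩ hu
  have hup : weightedBarrier ρ x₀ t₀ s k ε p.1 p.2 < 0 :=
    (hmin happexK).trans_lt (by simp [weightedBarrier, coneGap]; linarith)
  refine ⟨ε, η, hε, hη, p, hpK.1, ?_, hup, hmin⟩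
  by_contra! hle
  have hbarrier : C ≤ ε / coneGap x₀ t₀ s p.1 p.2 := by
    rw [le_div_iff₀ (hη.trans_le hpK.2)]
    calc C * coneGap x₀ t₀ s p.1 p.2 ≤ C * η := by gcongr
      _ = ε := by rw [hηdef, mul_div_cancel₀ _ hCpos.ne']
  have hlower := neg_le_of_abs_le (hC p hpK.1)
  unfold weightedBarrier at hup
  linarith

theorem nonneg_of_transport_ineq {L : ℝ} (ht₀ : 0 ≤ t₀) (hs : 0 ≤ s)
    (hcont : ContinuousOn (fun p : ℝ × ℝ => ρ p.1 p.2) (backwardCone x₀ t₀ s))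
    (hinit : ∀ x, 0 ≤ ρ x 0)
    (hineq : ∀ x t, (x, t) ∈ backwardCone x₀ t₀ s → 0 < t → ρ x t < 0 →
      DifferentiableAt ℝ (fun y => ρ y t) x ∧ DifferentiableAt ℝ (fun τ => ρ x τ) t ∧
        L * ρ x t - s * |deriv (fun y => ρ y t) x| ≤ deriv (fun τ => ρ x τ) t) :
    0 ≤ ρ x₀ t₀ := by
  by_contra! hneg
  obtain ⟨ε, η, hε, hη, ⟨x, t⟩, ⟨⟨ht0, htt₀⟩, hx⟩, hgap, hu, hmin⟩ :=
    exists_isMinOn_weightedBarrier ht₀ hs hcont hneg (L + 1)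
  have hρ : ρ x t < 0 := by
    have := div_pos hε (hη.trans hgap)
    unfold weightedBarrier at hu
    exact neg_of_mul_neg_left (by linarith) (Real.exp_pos _).le
  have htpos : 0 < t := ht0.lt_of_ne fun h => (hinit x).not_gt (h ▸ hρ)
  have hmem : ∀ y τ, 0 ≤ τ → τ ≤ t → η < coneGap x₀ t₀ s y τ →
      (y, τ) ∈ backwardCone x₀ t₀ s ∩ {p | η ≤ coneGap x₀ t₀ s p.1 p.2} :=
    fun y τ hτ0 hτt hτq => ⟨⟨⟨hτ0, hτt.trans htt₀⟩,
      abs_sub_le_of_coneGap_pos hs (hτt.trans htt₀) (hη.trans hτq)⟩, hτq.le⟩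
  have hminx : IsLocalMin (fun y => weightedBarrier ρ x₀ t₀ s (L + 1) ε y t) x := by
    filter_upwards [(continuous_coneGap.comp (Continuous.prodMk_left t)).continuousAt.eventually
      (lt_mem_nhds hgap)] with y hy
    exact hmin (hmem y t ht0 le_rfl hy)
  have hmint : IsLocalMinOn (fun τ => weightedBarrier ρ x₀ t₀ s (L + 1) ε x τ) (Iic t) t := by
    filter_upwards [nhdsWithin_le_nhds ((continuous_coneGap.comp
      (Continuous.prodMk_right x)).continuousAt.eventually (lt_mem_nhds hgap)),
      nhdsWithin_le_nhds (lt_mem_nhds htpos), self_mem_nhdsWithin] with τ hτq hτ0 hτt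
    exact hmin (hmem x τ hτ0.le hτt hτq)
  obtain ⟨hdx, hdt, hle⟩ := hineq x t ⟨⟨ht0, htt₀⟩, hx⟩ htpos hρ
  exact (lt_of_isLocalMin_weightedBarrier hs htt₀ hε.le (lt_add_one L) hρ (hη.trans hgap)
    hdx.hasDerivAt hdt.hasDerivAt hminx hmint).not_ge hle

end MinimumPrinciple

theorem mul_le_of_lipschitzWith_uncurry {α : Type*} [PseudoMetricSpace α] {f : ℝ → α → ℝ}
    {K : NNReal} (hf : LipschitzWith K (Function.uncurry f)) (hf0 : ∀ v, f 0 v = 0) {r : ℝ}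
    (hr : r ≤ 0) (v : α) : K * r ≤ f r v := by
  have h := hf.dist_le_mul (r, v) (0, v)
  simp only [Prod.dist_eq, Function.uncurry_apply_pair, hf0, dist_self, Real.dist_eq, sub_zero,
    abs_of_nonpos hr, max_eq_left (neg_nonneg.2 hr)] at h
  linarith [neg_abs_le (f r v)]

theorem exists_abs_le_of_continuous_of_abs_le {ι : Type*} {F : ℝ × ℝ → ℝ} (hF : Continuous F)
    {a b : ι → ℝ} {A B : ℝ} (ha : ∀ i, |a i| ≤ A) (hb : ∀ i, |b i| ≤ B) :
    ∃ s, ∀ i, |F (a i, b i)| ≤ s := by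
  obtain ⟨s, hs⟩ := (isCompact_Icc.prod isCompact_Icc).exists_bound_of_continuousOn
    (s := Icc (-A) A ×ˢ Icc (-B) B) hF.continuousOn
  exact ⟨s, fun i => hs _ ⟨abs_le.1 (ha i), abs_le.1 (hb i)⟩⟩

theorem transport_ineq_of_balance_law {ρ g : ℝ → ℝ → ℝ} {P : ℝ → ℝ}
    {x t ρx gx P' s M K src : ℝ}
    (hρx : HasDerivAt (fun y => ρ y t) ρx x) (hgx : HasDerivAt (fun y => g y t) gx x)
    (hP : HasDerivAt P P' (ρ x t))
    (hpde : deriv (fun τ => ρ x τ) t + deriv (fun y => ρ y t * (g y t - P (ρ y t))) x = src)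
    (hneg : ρ x t < 0) (hsrc : K * ρ x t ≤ src)
    (hspeed : |g x t - P (ρ x t) - ρ x t * P'| ≤ s) (hgx_le : |gx| ≤ M) :
    (K + M) * ρ x t - s * |ρx| ≤ deriv (fun τ => ρ x τ) t := by
  have hflux : HasDerivAt (fun y => ρ y t * (g y t - P (ρ y t)))
      (ρx * (g x t - P (ρ x t)) + ρ x t * (gx - P' * ρx)) x :=
    hρx.mul (hgx.sub (hP.comp x hρx))
  rw [hflux.deriv] at hpde
  have htransport : ρx * (g x t - P (ρ x t) - ρ x t * P') ≤ s * |ρx| := by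
    calc _ ≤ |ρx| * |g x t - P (ρ x t) - ρ x t * P'| := by rw [← abs_mul]; exact le_abs_self _
      _ ≤ s * |ρx| := by rw [mul_comm]; gcongr
  have hreaction : ρ x t * gx ≤ -(M * ρ x t) := by
    calc _ ≤ |ρ x t| * |gx| := by rw [← abs_mul]; exact le_abs_self _
      _ ≤ -ρ x t * M := by rw [abs_of_neg hneg]; gcongr; linarith
      _ = _ := by ring
  linarith

/-- Nonnegativity of classical solutions of the continuity equation
ρ_t + (ρ(Φ(w) − P(ρ)))_x = f(ρ,w) with f(0,·) = 0 and nonnegative initial data. -/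
theorem nonnegativity_of_density
    (T : ℝ) (hT : 0 < T)
    (w : ℝ → ℝ → ℝ) (hw : ContDiff ℝ 1 (Function.uncurry w))
    (hwb : ∃ C : ℝ, ∀ x t : ℝ, |w x t| ≤ C)
    (Φ P : ℝ → ℝ) (hΦ : ContDiff ℝ 1 Φ) (hP : ContDiff ℝ 1 P)
    (f : ℝ → ℝ → ℝ) (K : NNReal) (hf : LipschitzWith K (Function.uncurry f))
    (hf0 : ∀ v : ℝ, f 0 v = 0)
    (ρ : ℝ → ℝ → ℝ)
    (hρc : ContinuousOn (fun p : ℝ × ℝ => ρ p.1 p.2) (Set.univ ×ˢ Set.Icc 0 T))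
    (hρb : ∃ C : ℝ, ∀ x t : ℝ, |ρ x t| ≤ C)
    (hreg : ∀ x t : ℝ, 0 < t → t < T →
      DifferentiableAt ℝ (fun s => ρ x s) t ∧
      DifferentiableAt ℝ (fun y => ρ y t) x ∧
      DifferentiableAt ℝ (fun y => deriv (fun z => ρ z t) y) x)
    (hpde : ∀ x t : ℝ, 0 < t → t < T →
      deriv (fun s => ρ x s) t
        + deriv (fun y => ρ y t * (Φ (w y t) - P (ρ y t))) x
        = f (ρ x t) (w x t))
    (hinit : ∀ x : ℝ, 0 ≤ ρ x 0) :
    ∀ x t : ℝ, t ∈ Set.Icc 0 T → 0 ≤ ρ x t := by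
  obtain ⟨Cw, hCw⟩ := hwb
  obtain ⟨Cρ, hCρ⟩ := hρb
  have hΦw : ContDiff ℝ 1 (Φ ∘ Function.uncurry w) := hΦ.comp hw
  have hP' : Continuous (deriv P) := hP.continuous_deriv le_rfl
  obtain ⟨s, hspeed⟩ := exists_abs_le_of_continuous_of_abs_le
    (F := fun q : ℝ × ℝ => Φ q.1 - P q.2 - q.2 * deriv P q.2) (by fun_prop)
    (a := fun p : ℝ × ℝ => w p.1 p.2) (b := fun p : ℝ × ℝ => ρ p.1 p.2)
    (fun p => hCw p.1 p.2) (fun p => hCρ p.1 p.2)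
  have hs : 0 ≤ s := (abs_nonneg _).trans (hspeed 0)
  have hinterior : ∀ x₀ t₀, 0 < t₀ → t₀ < T → 0 ≤ ρ x₀ t₀ := by
    intro x₀ t₀ ht₀ ht₀T
    obtain ⟨M, hM⟩ := (isCompact_backwardCone (x₀ := x₀) (t₀ := t₀) hs).exists_bound_of_continuousOn
      (f := fun p => fderiv ℝ (Φ ∘ Function.uncurry w) p (1, 0))
      ((hΦw.continuous_fderiv one_ne_zero).clm_apply continuous_const).continuousOn
    refine nonneg_of_transport_ineq (L := K + M) ht₀.le hs
      (hρc.mono fun p hp => ⟨trivial, hp.1.1, hp.1.2.trans ht₀T.le⟩) hinit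
      fun x t hmem ht hneg => ?_
    have htT : t < T := hmem.1.2.trans_lt ht₀T
    obtain ⟨hdt, hdx, -⟩ := hreg x t ht htT
    exact ⟨hdx, hdt, transport_ineq_of_balance_law (g := fun y t => Φ (w y t)) hdx.hasDerivAt
      (hΦw.differentiable one_ne_zero (x, t)).hasFDerivAt.hasDerivAt_partial_fst
      (hP.differentiable one_ne_zero _).hasDerivAt (hpde x t ht htT) hneg
      (mul_le_of_lipschitzWith_uncurry hf hf0 hneg.le _) (hspeed (x, t)) (hM _ hmem)⟩
  intro x t ht
  have hslice : ContinuousOn (fun τ => ρ x τ) (Icc 0 T) :=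
    hρc.comp (Continuous.prodMk_right x).continuousOn fun τ hτ => ⟨trivial, hτ⟩
  rw [← closure_Ioo hT.ne] at ht hslice
  exact le_on_closure (fun τ hτ => hinterior x τ hτ.1 hτ.2) continuousOn_const hslice ht
end

section
/- Let Φ : ℝ → ℝ be C² with Φ' > 0 and let P : (0,∞) → ℝ be C². Fix ρ > 0, m ∈ ℝ, write w = m/ρ, and let G₁(ρ,m) = C₁ − (Φ(m/ρ) − P(ρ)). Then for every vector r = (X,Y) ∈ ℝ² with r · ∇G₁(ρ,m) = 0 one has Y = X(m/ρ + ρP'(ρ)/Φ'(w)) and the Hessian quadratic form satisfies ∇²G₁(ρ,m)(r,r) = X² ( (2P'(ρ) + ρP''(ρ))/ρ − Φ''(w) (P'(ρ)/Φ'(w))² ). -/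
/-!
With `w = m / ρ`, the gradient of `G₁` is `(Φ'(w) w / ρ + P'(ρ), -Φ'(w) / ρ)`, so a vector
`(X, Y)` is tangent to the level set exactly when `Y - w X = ρ P'(ρ) X / Φ'(w)`. Differentiating
the gradient once more, the Hessian quadratic form is
`P''(ρ) X² - Φ''(w) (Y - w X)² / ρ² + 2 Φ'(w) X (Y - w X) / ρ²`,
and substituting the tangency relation gives the formula.
-/

open ContinuousLinearMap Set Topology

noncomputable def dotForm (a b : ℝ) : ℝ × ℝ →L[ℝ] ℝ :=
  a • fst ℝ ℝ ℝ + b • snd ℝ ℝ ℝ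

@[simp] lemma dotForm_apply (a b : ℝ) (v : ℝ × ℝ) : dotForm a b v = a * v.1 + b * v.2 := by
  simp [dotForm]

lemma HasFDerivAt.dotForm {E : Type*} [NormedAddCommGroup E] [NormedSpace ℝ E]
    {a b : E → ℝ} {a' b' : E →L[ℝ] ℝ} {x : E} (ha : HasFDerivAt a a' x) (hb : HasFDerivAt b b' x) :
    HasFDerivAt (fun y => _root_.dotForm (a y) (b y))
      (a'.smulRight (ContinuousLinearMap.fst ℝ ℝ ℝ)
        + b'.smulRight (ContinuousLinearMap.snd ℝ ℝ ℝ)) x :=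
  (ha.smul_const (ContinuousLinearMap.fst ℝ ℝ ℝ)).add
    (hb.smul_const (ContinuousLinearMap.snd ℝ ℝ ℝ))

lemma HasDerivAt.comp_fst {f : ℝ → ℝ} {f' : ℝ} {p : ℝ × ℝ} (hf : HasDerivAt f f' p.1) :
    HasFDerivAt (fun q : ℝ × ℝ => f q.1) (dotForm f' 0) p :=
  (hf.comp_hasFDerivAt p hasFDerivAt_fst).congr_fderiv (by ext <;> simp)

lemma hasFDerivAt_snd_div_fst {p : ℝ × ℝ} (hp : p.1 ≠ 0) :
    HasFDerivAt (fun q : ℝ × ℝ => q.2 / q.1) (dotForm (-(p.2 / p.1 ^ 2)) p.1⁻¹) p := by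
  have h : HasFDerivAt (fun q : ℝ × ℝ => q.2 * q.1⁻¹) _ p :=
    hasFDerivAt_snd.mul (hasDerivAt_inv hp).comp_fst
  simp only [← div_eq_mul_inv] at h
  exact h.congr_fderiv (by ext <;> simp; ring)

lemma HasDerivAt.comp_snd_div_fst {f : ℝ → ℝ} {f' : ℝ} {p : ℝ × ℝ}
    (hf : HasDerivAt f f' (p.2 / p.1)) (hp : p.1 ≠ 0) :
    HasFDerivAt (fun q : ℝ × ℝ => f (q.2 / q.1)) (dotForm (-(f' * p.2 / p.1 ^ 2)) (f' / p.1)) p :=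
  (hf.comp_hasFDerivAt p (hasFDerivAt_snd_div_fst hp)).congr_fderiv (by ext <;> simp <;> ring)

namespace KeyfitzKranzer

noncomputable def G₁ (Φ P : ℝ → ℝ) (C₁ : ℝ) (p : ℝ × ℝ) : ℝ := C₁ - (Φ (p.2 / p.1) - P p.1)

noncomputable def gradG₁ (Φ' P' : ℝ → ℝ) (p : ℝ × ℝ) : ℝ × ℝ →L[ℝ] ℝ :=
  dotForm (Φ' (p.2 / p.1) * (p.2 / p.1) * p.1⁻¹ + P' p.1) (-(Φ' (p.2 / p.1) * p.1⁻¹))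

variable {Φ P Φ' P' : ℝ → ℝ} {p : ℝ × ℝ}

lemma hasFDerivAt_G₁ (C₁ : ℝ) (hΦ : HasDerivAt Φ (Φ' (p.2 / p.1)) (p.2 / p.1))
    (hP : HasDerivAt P (P' p.1) p.1) (hp : p.1 ≠ 0) :
    HasFDerivAt (G₁ Φ P C₁) (gradG₁ Φ' P' p) p :=
  (((hΦ.comp_snd_div_fst hp).sub hP.comp_fst).const_sub C₁).congr_fderiv
    (by ext <;> simp [gradG₁] <;> ring)

lemma gradG₁_apply_eq_zero_iff (hA : Φ' (p.2 / p.1) ≠ 0) (hp : p.1 ≠ 0) (X Y : ℝ) :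
    gradG₁ Φ' P' p (X, Y) = 0 ↔ Y = X * (p.2 / p.1 + p.1 * P' p.1 / Φ' (p.2 / p.1)) := by
  have h : gradG₁ Φ' P' p (X, Y) =
      -(Φ' (p.2 / p.1) / p.1) * (Y - X * (p.2 / p.1 + p.1 * P' p.1 / Φ' (p.2 / p.1))) := by
    simp only [gradG₁, dotForm_apply]
    field_simp
    ring
  rw [h, mul_eq_zero, sub_eq_zero]
  simp [hA, hp]

lemma fderiv_gradG₁_apply_self {Φ'' P'' : ℝ} (hΦ' : HasDerivAt Φ' Φ'' (p.2 / p.1))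
    (hP' : HasDerivAt P' P'' p.1) (hp : p.1 ≠ 0) (X Y : ℝ) :
    fderiv ℝ (gradG₁ Φ' P') p (X, Y) (X, Y) =
      P'' * X ^ 2 - Φ'' * (Y - p.2 / p.1 * X) ^ 2 / p.1 ^ 2
        + 2 * Φ' (p.2 / p.1) * X * (Y - p.2 / p.1 * X) / p.1 ^ 2 := by
  have hΦ'w := hΦ'.comp_snd_div_fst hp
  have hinv := (hasDerivAt_inv hp).comp_fst
  have ha := ((hΦ'w.mul (hasFDerivAt_snd_div_fst hp)).mul hinv).add hP'.comp_fst
  have hb := (hΦ'w.mul hinv).neg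
  have h : HasFDerivAt (gradG₁ Φ' P') _ p := ha.dotForm hb
  rw [h.fderiv]
  simp only [Pi.mul_apply, add_apply, neg_apply, smul_apply, smulRight_apply, coe_fst', coe_snd',
    dotForm_apply, smul_eq_mul]
  field_simp
  ring

end KeyfitzKranzer

open KeyfitzKranzer

/-- Quasi-convexity computation for G₁(ρ,m) = C₁ − (Φ(m/ρ) − P(ρ)):
on the orthogonal complement of ∇G₁ one has Y = X(m/ρ + ρP'(ρ)/Φ'(m/ρ)) and
∇²G₁(r,r) = X²((2P'(ρ) + ρP''(ρ))/ρ − Φ''(m/ρ)(P'(ρ)/Φ'(m/ρ))²). -/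
theorem hessian_of_G1_on_tangent_directions
    (Φ P : ℝ → ℝ) (hΦ : ContDiff ℝ 2 Φ) (hΦ' : ∀ s : ℝ, 0 < deriv Φ s)
    (hP : ContDiffOn ℝ 2 P (Set.Ioi 0))
    (C₁ : ℝ) (ρ m : ℝ) (hρ : 0 < ρ) (X Y : ℝ)
    (hr : fderiv ℝ (fun p : ℝ × ℝ => C₁ - (Φ (p.2 / p.1) - P p.1)) (ρ, m) (X, Y) = 0) :
    Y = X * (m / ρ + ρ * deriv P ρ / deriv Φ (m / ρ)) ∧
    fderiv ℝ (fderiv ℝ (fun p : ℝ × ℝ => C₁ - (Φ (p.2 / p.1) - P p.1))) (ρ, m) (X, Y) (X, Y)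
      = X ^ 2 * ((2 * deriv P ρ + ρ * deriv (deriv P) ρ) / ρ
          - deriv (deriv Φ) (m / ρ) * (deriv P ρ / deriv Φ (m / ρ)) ^ 2) := by
  have hgrad : fderiv ℝ (G₁ Φ P C₁) =ᶠ[𝓝 (ρ, m)] gradG₁ (deriv Φ) (deriv P) := by
    filter_upwards [continuous_fst.isOpen_preimage _ isOpen_Ioi |>.mem_nhds hρ] with q hq
    have hPq := ((hP.differentiableOn two_ne_zero).differentiableAt (Ioi_mem_nhds hq)).hasDerivAt
    exact (hasFDerivAt_G₁ C₁ (hΦ.differentiable two_ne_zero _).hasDerivAt hPq hq.ne').fderiv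
  have hA : deriv Φ (m / ρ) ≠ 0 := (hΦ' _).ne'
  have hY := (gradG₁_apply_eq_zero_iff hA hρ.ne' X Y).mp (by rwa [← hgrad.eq_of_nhds])
  refine ⟨hY, ?_⟩
  have hΦ'' := (hΦ.differentiable_deriv_two (m / ρ)).hasDerivAt
  have hP'' := (((hP.deriv_of_isOpen isOpen_Ioi (m := 1) le_rfl).differentiableOn one_ne_zero)
    |>.differentiableAt (Ioi_mem_nhds hρ)).hasDerivAt
  change fderiv ℝ (fderiv ℝ (G₁ Φ P C₁)) (ρ, m) (X, Y) (X, Y) = _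
  rw [hgrad.fderiv_eq, fderiv_gradG₁_apply_self hΦ'' hP'' hρ.ne', hY]
  field_simp
  ring
end

section
/- Let Φ, P, and F : ℝ → ℝ be C¹ (with P defined on (0,∞)), and for ρ > 0 define η(ρ,m) = ρ F(m/ρ) and q(ρ,m) = ρ F(m/ρ) φ(ρ,m), where φ(ρ,m) = Φ(m/ρ) − P(ρ). Then (η,q) is an entropy–entropy flux pair for the symmetric system with flux G(ρ,m) = (ρφ, mφ): that is, ∇q(ρ,m) = ∇η(ρ,m) · dG(ρ,m) for all ρ > 0, m ∈ ℝ. -/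
/-!
Write `U = (ρ, m)`. Then `q = η φ` and `G = φ U`, so `dG = φ I + U ⊗ ∇φ` and
`∇η · dG = φ ∇η + (∇η · U) ∇φ`. Since `η` is positively homogeneous of degree one, Euler's
identity gives `∇η · U = η`, and the right-hand side becomes `φ ∇η + η ∇φ = ∇(η φ) = ∇q`.
-/

open Filter Topology

section Homogeneous

variable {E : Type*} [NormedAddCommGroup E] [NormedSpace ℝ E] {η φ : E → ℝ} {p : E}

theorem fderiv_apply_self_of_homogeneous (hη : DifferentiableAt ℝ η p)
    (hhom : ∀ᶠ t in 𝓝 (1 : ℝ), η (t • p) = t * η p) : fderiv ℝ η p p = η p := by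
  have hray : HasDerivAt (fun t : ℝ => η (t • p)) (fderiv ℝ η p p) 1 := by
    have hline : HasDerivAt (fun t : ℝ => t • p) p 1 := by
      simpa using (hasDerivAt_id (1 : ℝ)).smul_const p
    exact hη.hasFDerivAt.comp_hasDerivAt_of_eq 1 hline (one_smul ℝ p).symm
  have hlin : HasDerivAt (fun t : ℝ => t * η p) (η p) 1 := by
    simpa using (hasDerivAt_id (1 : ℝ)).mul_const (η p)
  exact hray.unique (hlin.congr_of_eventuallyEq hhom)

theorem fderiv_mul_eq_comp_fderiv_smul_self (hη : DifferentiableAt ℝ η p)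
    (hφ : DifferentiableAt ℝ φ p) (heuler : fderiv ℝ η p p = η p) :
    fderiv ℝ (fun y => η y * φ y) p = (fderiv ℝ η p).comp (fderiv ℝ (fun y => φ y • y) p) := by
  rw [fderiv_fun_mul hη hφ, fderiv_fun_smul hφ differentiableAt_fun_id, fderiv_fun_id]
  ext v
  simp only [ContinuousLinearMap.comp_apply, add_apply, smul_apply,
    ContinuousLinearMap.smulRight_apply, ContinuousLinearMap.id_apply, map_add, map_smul, heuler,
    smul_eq_mul]
  ring

end Homogeneous

noncomputable def perspective (F : ℝ → ℝ) (p : ℝ × ℝ) : ℝ :=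
  p.1 * F (p.2 / p.1)

theorem perspective_smul (F : ℝ → ℝ) {t : ℝ} (ht : t ≠ 0) (p : ℝ × ℝ) :
    perspective F (t • p) = t * perspective F p := by
  simp only [perspective, Prod.smul_fst, Prod.smul_snd, smul_eq_mul, mul_div_mul_left _ _ ht,
    mul_assoc]

/-- (η, q) with η(ρ,m) = ρF(m/ρ) and q(ρ,m) = ρF(m/ρ)φ(ρ,m),
φ(ρ,m) = Φ(m/ρ) − P(ρ), is an entropy–entropy flux pair for the symmetric
Keyfitz–Kranzer system with flux G(ρ,m) = (ρφ, mφ): ∇q = ∇η · dG on {ρ > 0}. -/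
theorem entropy_entropy_flux_pair
    (Φ P F : ℝ → ℝ) (hΦ : ContDiff ℝ 1 Φ) (hP : ContDiffOn ℝ 1 P (Set.Ioi 0))
    (hF : ContDiff ℝ 1 F) :
    ∀ ρ m : ℝ, 0 < ρ →
      fderiv ℝ (fun p : ℝ × ℝ => p.1 * F (p.2 / p.1) * (Φ (p.2 / p.1) - P p.1)) (ρ, m)
        = (fderiv ℝ (fun p : ℝ × ℝ => p.1 * F (p.2 / p.1)) (ρ, m)).comp
            (fderiv ℝ (fun p : ℝ × ℝ =>
              (p.1 * (Φ (p.2 / p.1) - P p.1), p.2 * (Φ (p.2 / p.1) - P p.1))) (ρ, m)) := by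
  intro ρ m hρ
  have hρ0 : ρ ≠ 0 := hρ.ne'
  have hF' : DifferentiableAt ℝ F (m / ρ) := hF.differentiable one_ne_zero _
  have hΦ' : DifferentiableAt ℝ Φ (m / ρ) := hΦ.differentiable one_ne_zero _
  have hP' : DifferentiableAt ℝ P ρ :=
    (hP.differentiableOn one_ne_zero ρ hρ).differentiableAt (Ioi_mem_nhds hρ)
  have hη : DifferentiableAt ℝ (perspective F) (ρ, m) := by
    unfold perspective
    fun_prop (disch := assumption)
  have hφ : DifferentiableAt ℝ (fun p : ℝ × ℝ => Φ (p.2 / p.1) - P p.1) (ρ, m) := by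
    fun_prop (disch := assumption)
  have hG : (fun p : ℝ × ℝ => (p.1 * (Φ (p.2 / p.1) - P p.1), p.2 * (Φ (p.2 / p.1) - P p.1)))
      = fun p => (Φ (p.2 / p.1) - P p.1) • p := by
    ext p <;> simp [mul_comm]
  rw [hG]
  refine fderiv_mul_eq_comp_fderiv_smul_self hη hφ (fderiv_apply_self_of_homogeneous hη ?_)
  filter_upwards [eventually_ne_nhds one_ne_zero] with t ht using perspective_smul F ht (ρ, m)
end

section
/- Let Φ, P, F be C² (P on (0,∞)), f, g continuous, ε > 0, and let (ρ, m) be a classical solution of the viscous system ρ_t + (ρφ(ρ,m))_x = ε ρ_xx + f(ρ,m), m_t + (mφ(ρ,m))_x = ε m_xx + g(ρ,m) on an open set where ρ > 0, with φ(ρ,m) = Φ(m/ρ) − P(ρ). Then for η(ρ,m) = ρF(m/ρ) and q(ρ,m) = ρF(m/ρ)φ(ρ,m), the pointwise identity η(ρ,m)_t + q(ρ,m)_x = ε η(ρ,m)_xx − ε (F''(m/ρ)/ρ)((m/ρ)ρ_x − m_x)² + ∇η(ρ,m) · (f(ρ,m), g(ρ,m)) holds. -/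
/-!
With `u = m/ρ`, the entropy `η = ρ F(u)` has gradient `(F(u) - u F'(u), F'(u))` and is positively
homogeneous of degree one, so `∇η(ρ, m) · (ρ, m) = η` (Euler). Hence for `q = ηφ` and any `φ`,
`q_x = η_x φ + η φ_x = ∇η · ((ρφ)_x, (mφ)_x)`. Substituting the equations into
`η_t = ∇η · (ρ_t, m_t)` therefore leaves `η_t + q_x = ε ∇η · (ρ_xx, m_xx) + ∇η · (f, g)`, and the
chain rule applied twice gives `η_xx = ∇η · (ρ_xx, m_xx) + (F''(u)/ρ) (u ρ_x - m_x)²`.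
-/

open Filter Topology

section Slices

variable {𝕜 : Type*} [NontriviallyNormedField 𝕜] {E F G : Type*}
  [NormedAddCommGroup E] [NormedSpace 𝕜 E] [NormedAddCommGroup F] [NormedSpace 𝕜 F]
  [NormedAddCommGroup G] [NormedSpace 𝕜 G] {n : WithTop ℕ∞} {w : E → F → G} {U : Set (E × F)}
  {x : E} {t : F}

theorem ContDiffOn.contDiffAt_left (hw : ContDiffOn 𝕜 n (fun p : E × F => w p.1 p.2) U)
    (hU : IsOpen U) (hxt : (x, t) ∈ U) : ContDiffAt 𝕜 n (fun y => w y t) x :=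
  (hw.contDiffAt (hU.mem_nhds hxt)).comp x (contDiffAt_id.prodMk contDiffAt_const)

theorem ContDiffOn.contDiffAt_right (hw : ContDiffOn 𝕜 n (fun p : E × F => w p.1 p.2) U)
    (hU : IsOpen U) (hxt : (x, t) ∈ U) : ContDiffAt 𝕜 n (fun s => w x s) t :=
  (hw.contDiffAt (hU.mem_nhds hxt)).comp t (contDiffAt_const.prodMk contDiffAt_id)

end Slices

section Deriv

variable {𝕜 : Type*} [NontriviallyNormedField 𝕜] {f : 𝕜 → 𝕜} {x : 𝕜} {n : WithTop ℕ∞}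

theorem ContDiffAt.eventually_hasDerivAt (hf : ContDiffAt 𝕜 n f x) (hn : 1 ≤ n) :
    ∀ᶠ y in 𝓝 x, HasDerivAt f (deriv f y) y :=
  ((hf.of_le hn).eventually (by simp)).mono fun _ hy =>
    (hy.differentiableAt one_ne_zero).hasDerivAt

theorem ContDiffAt.hasDerivAt_deriv (hf : ContDiffAt 𝕜 n f x) (hn : 2 ≤ n) :
    HasDerivAt (deriv f) (deriv (deriv f) x) x :=
  ((hf.derivWithin (m := 1) hn).differentiableAt one_ne_zero).hasDerivAt

end Deriv

theorem hasFDerivAt_mul_comp_div {F : ℝ → ℝ} {F' r M : ℝ} (hF : HasDerivAt F F' (M / r))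
    (hr : r ≠ 0) :
    HasFDerivAt (fun p : ℝ × ℝ => p.1 * F (p.2 / p.1))
      ((F (M / r) - M / r * F') • ContinuousLinearMap.fst ℝ ℝ ℝ
        + F' • ContinuousLinearMap.snd ℝ ℝ ℝ) (r, M) := by
  have hq : HasFDerivAt (fun p : ℝ × ℝ => p.2 * p.1⁻¹) _ (r, M) :=
    hasFDerivAt_snd.mul ((hasFDerivAt_inv hr).comp (r, M) hasFDerivAt_fst)
  simp only [← div_eq_mul_inv] at hq
  refine (hasFDerivAt_fst.mul (hF.comp_hasFDerivAt (r, M) hq)).congr_fderiv ?_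
  refine ContinuousLinearMap.ext fun p => ?_
  simp only [add_apply, smul_apply, smul_eq_mul, Function.comp_apply,
    ContinuousLinearMap.comp_apply, ContinuousLinearMap.coe_fst', ContinuousLinearMap.coe_snd',
    ContinuousLinearMap.toSpanSingleton_apply]
  field_simp
  ring

theorem fderiv_mul_comp_div_apply {F : ℝ → ℝ} {F' r M : ℝ} (hF : HasDerivAt F F' (M / r))
    (hr : r ≠ 0) (a b : ℝ) :
    fderiv ℝ (fun p : ℝ × ℝ => p.1 * F (p.2 / p.1)) (r, M) (a, b)
      = (F (M / r) - M / r * F') * a + F' * b := by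
  simp [(hasFDerivAt_mul_comp_div hF hr).fderiv]

theorem HasDerivAt.mul_comp_div {F : ℝ → ℝ} {r M : ℝ → ℝ} {F' r' M' x : ℝ}
    (hr : HasDerivAt r r' x) (hM : HasDerivAt M M' x) (hr0 : r x ≠ 0)
    (hF : HasDerivAt F F' (M x / r x)) :
    HasDerivAt (fun y => r y * F (M y / r y))
      ((F (M x / r x) - M x / r x * F') * r' + F' * M') x := by
  exact (hasFDerivAt_mul_comp_div hF hr0).comp_hasDerivAt x (hr.prodMk hM)

theorem hasDerivAt_deriv_mul_comp_div {F F' : ℝ → ℝ} {r M r' M' : ℝ → ℝ} {F'' r'' M'' x : ℝ}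
    (hr : ∀ᶠ y in 𝓝 x, HasDerivAt r (r' y) y) (hM : ∀ᶠ y in 𝓝 x, HasDerivAt M (M' y) y)
    (hr0 : r x ≠ 0) (hr' : HasDerivAt r' r'' x) (hM' : HasDerivAt M' M'' x)
    (hF : ∀ v, HasDerivAt F (F' v) v) (hF' : HasDerivAt F' F'' (M x / r x)) :
    HasDerivAt (deriv fun y => r y * F (M y / r y))
      ((F (M x / r x) - M x / r x * F' (M x / r x)) * r'' + F' (M x / r x) * M''
        + F'' / r x * (M x / r x * r' x - M' x) ^ 2) x := by
  have hr_ne : ∀ᶠ y in 𝓝 x, r y ≠ 0 := hr.self_of_nhds.continuousAt.eventually_ne hr0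
  have hderiv : deriv (fun y => r y * F (M y / r y)) =ᶠ[𝓝 x]
      fun y => (F (M y / r y) - M y / r y * F' (M y / r y)) * r' y + F' (M y / r y) * M' y := by
    filter_upwards [hr, hM, hr_ne] with y hry hMy hy
    exact (hry.mul_comp_div hMy hy (hF _)).deriv
  set u := M x / r x
  set u' := (M' x * r x - M x * r' x) / r x ^ 2
  have hu : HasDerivAt (fun y => M y / r y) u' x := hM.self_of_nhds.div hr.self_of_nhds hr0
  have hgrad : HasDerivAt
      (fun y => (F (M y / r y) - M y / r y * F' (M y / r y)) * r' y + F' (M y / r y) * M' y)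
      ((F' u * u' - (u' * F' u + u * (F'' * u'))) * r' x + (F u - u * F' u) * r''
        + (F'' * u' * M' x + F' u * M'')) x :=
    ((((hF u).comp x hu).sub (hu.mul (hF'.comp x hu))).mul hr').add ((hF'.comp x hu).mul hM')
  refine (hgrad.congr_of_eventuallyEq hderiv).congr_deriv ?_
  simp only [u, u']
  field_simp
  ring

theorem euler_mul_comp_div (F : ℝ → ℝ) (F' : ℝ) {r : ℝ} (hr : r ≠ 0) (M : ℝ) :
    (F (M / r) - M / r * F') * r + F' * M = r * F (M / r) := by
  field_simp
  ring

theorem viscous_entropy_balance_general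
    (Φ P F : ℝ → ℝ) (hΦ : ContDiff ℝ 2 Φ) (hP : ContDiffOn ℝ 2 P (Set.Ioi 0))
    (hF : ContDiff ℝ 2 F)
    (f g : ℝ → ℝ → ℝ)
    (ε : ℝ)
    (U : Set (ℝ × ℝ)) (hU : IsOpen U)
    (ρ m : ℝ → ℝ → ℝ)
    (hρ : ContDiffOn ℝ 2 (fun p : ℝ × ℝ => ρ p.1 p.2) U)
    (hm : ContDiffOn ℝ 2 (fun p : ℝ × ℝ => m p.1 p.2) U)
    (hpos : ∀ x t : ℝ, (x, t) ∈ U → 0 < ρ x t)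
    (hpde1 : ∀ x t : ℝ, (x, t) ∈ U →
      deriv (fun s => ρ x s) t
        + deriv (fun y => ρ y t * (Φ (m y t / ρ y t) - P (ρ y t))) x
        = ε * deriv (fun y => deriv (fun z => ρ z t) y) x + f (ρ x t) (m x t))
    (hpde2 : ∀ x t : ℝ, (x, t) ∈ U →
      deriv (fun s => m x s) t
        + deriv (fun y => m y t * (Φ (m y t / ρ y t) - P (ρ y t))) x
        = ε * deriv (fun y => deriv (fun z => m z t) y) x + g (ρ x t) (m x t)) :
    ∀ x t : ℝ, (x, t) ∈ U →
      deriv (fun s => ρ x s * F (m x s / ρ x s)) t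
        + deriv (fun y => ρ y t * F (m y t / ρ y t) * (Φ (m y t / ρ y t) - P (ρ y t))) x
        = ε * deriv (fun y => deriv (fun z => ρ z t * F (m z t / ρ z t)) y) x
          - ε * (deriv (deriv F) (m x t / ρ x t) / ρ x t)
              * ((m x t / ρ x t) * deriv (fun y => ρ y t) x
                  - deriv (fun y => m y t) x) ^ 2
          + fderiv ℝ (fun p : ℝ × ℝ => p.1 * F (p.2 / p.1)) (ρ x t, m x t)
              (f (ρ x t) (m x t), g (ρ x t) (m x t)) := by
  intro x t hxt
  have hρ0 : ρ x t ≠ 0 := (hpos x t hxt).ne'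
  have hF' : ∀ v, HasDerivAt F (deriv F v) v :=
    fun v => (hF.differentiable two_ne_zero v).hasDerivAt
  have hF'' : ∀ v, HasDerivAt (deriv F) (deriv (deriv F) v) v :=
    fun v => (hF.differentiable_deriv_two v).hasDerivAt
  have hρx := hρ.contDiffAt_left hU hxt
  have hmx := hm.contDiffAt_left hU hxt
  have hρt := ((hρ.contDiffAt_right hU hxt).differentiableAt two_ne_zero).hasDerivAt
  have hmt := ((hm.contDiffAt_right hU hxt).differentiableAt two_ne_zero).hasDerivAt
  have hρx' := (hρx.differentiableAt two_ne_zero).hasDerivAt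
  have hmx' := (hmx.differentiableAt two_ne_zero).hasDerivAt
  have hφ : HasDerivAt (fun y => Φ (m y t / ρ y t) - P (ρ y t))
      (deriv (fun y => Φ (m y t / ρ y t) - P (ρ y t)) x) x := by
    refine DifferentiableAt.hasDerivAt (.sub ?_ ?_)
    · exact (hΦ.differentiable two_ne_zero _).comp x
        (hmx'.differentiableAt.div hρx'.differentiableAt hρ0)
    · exact ((hP.differentiableOn two_ne_zero).differentiableAt
        (Ioi_mem_nhds (hpos x t hxt))).comp x hρx'.differentiableAt
  have E1 := hpde1 x t hxt
  have E2 := hpde2 x t hxt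
  rw [(hρx'.fun_mul hφ).deriv] at E1
  rw [(hmx'.fun_mul hφ).deriv] at E2
  have hEuler := euler_mul_comp_div F (deriv F (m x t / ρ x t)) hρ0 (m x t)
  rw [(hρt.mul_comp_div hmt hρ0 (hF' _)).deriv,
    ((hρx'.mul_comp_div hmx' hρ0 (hF' _)).fun_mul hφ).deriv,
    (hasDerivAt_deriv_mul_comp_div (hρx.eventually_hasDerivAt (by norm_num))
      (hmx.eventually_hasDerivAt (by norm_num)) hρ0 (hρx.hasDerivAt_deriv le_rfl)
      (hmx.hasDerivAt_deriv le_rfl) hF' (hF'' _)).deriv,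
    fderiv_mul_comp_div_apply (hF' _) hρ0]
  linear_combination (F (m x t / ρ x t) - m x t / ρ x t * deriv F (m x t / ρ x t)) * E1
    + deriv F (m x t / ρ x t) * E2
    - deriv (fun y => Φ (m y t / ρ y t) - P (ρ y t)) x * hEuler

/-- Entropy balance identity for classical solutions of the viscous symmetric
Keyfitz–Kranzer system: with η = ρF(m/ρ), q = ηφ, φ = Φ(m/ρ) − P(ρ),
η_t + q_x = εη_xx − ε(F''(m/ρ)/ρ)((m/ρ)ρ_x − m_x)² + ∇η·(f,g). -/
theorem viscous_entropy_balance
    (Φ P F : ℝ → ℝ) (hΦ : ContDiff ℝ 2 Φ) (hP : ContDiffOn ℝ 2 P (Set.Ioi 0))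
    (hF : ContDiff ℝ 2 F)
    (f g : ℝ → ℝ → ℝ) (hf : Continuous (Function.uncurry f))
    (hg : Continuous (Function.uncurry g))
    (ε : ℝ) (hε : 0 < ε)
    (U : Set (ℝ × ℝ)) (hU : IsOpen U)
    (ρ m : ℝ → ℝ → ℝ)
    (hρ : ContDiffOn ℝ 2 (fun p : ℝ × ℝ => ρ p.1 p.2) U)
    (hm : ContDiffOn ℝ 2 (fun p : ℝ × ℝ => m p.1 p.2) U)
    (hpos : ∀ x t : ℝ, (x, t) ∈ U → 0 < ρ x t)
    (hpde1 : ∀ x t : ℝ, (x, t) ∈ U →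
      deriv (fun s => ρ x s) t
        + deriv (fun y => ρ y t * (Φ (m y t / ρ y t) - P (ρ y t))) x
        = ε * deriv (fun y => deriv (fun z => ρ z t) y) x + f (ρ x t) (m x t))
    (hpde2 : ∀ x t : ℝ, (x, t) ∈ U →
      deriv (fun s => m x s) t
        + deriv (fun y => m y t * (Φ (m y t / ρ y t) - P (ρ y t))) x
        = ε * deriv (fun y => deriv (fun z => m z t) y) x + g (ρ x t) (m x t)) :
    ∀ x t : ℝ, (x, t) ∈ U →
      deriv (fun s => ρ x s * F (m x s / ρ x s)) t
        + deriv (fun y => ρ y t * F (m y t / ρ y t) * (Φ (m y t / ρ y t) - P (ρ y t))) x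
        = ε * deriv (fun y => deriv (fun z => ρ z t * F (m z t / ρ z t)) y) x
          - ε * (deriv (deriv F) (m x t / ρ x t) / ρ x t)
              * ((m x t / ρ x t) * deriv (fun y => ρ y t) x
                  - deriv (fun y => m y t) x) ^ 2
          + fderiv ℝ (fun p : ℝ × ℝ => p.1 * F (p.2 / p.1)) (ρ x t, m x t)
              (f (ρ x t) (m x t), g (ρ x t) (m x t)) :=
  viscous_entropy_balance_general Φ P F hΦ hP hF f g ε U hU ρ m hρ hm hpos hpde1 hpde2
end
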